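/- The combined Welford updates preserve the invariant: for any n ≥ 1, if (x̄, s²) equal the population mean and variance of x_1,...,x_{n-1} (with both set to 0 when n = 1), then after the updates x̄' = x̄ + (x_n - x̄)/n and s²' = (1 - 1/n)s² + (x_n - x̄)(x_n - x̄')/n, the pair (x̄', s²') equals the population mean and variance of x_1,...,x_n. -/

import Mathlib

/-- Population mean of `x 1, ..., x k` (equal to `0` when `k = 0`, by Lean's
division-by-zero convention). -/
noncomputable def popMean (x : ℕ → ℝ) (k : ℕ) : ℝ :=
  (∑ i ∈ Finset.Icc 1 k, x i) / k

/-- Population variance of `x 1, ..., x k` (equal to `0` when `k = 0`). -/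
noncomputable def popVar (x : ℕ → ℝ) (k : ℕ) : ℝ :=
  (∑ i ∈ Finset.Icc 1 k, (x i - popMean x k) ^ 2) / k

/-
Both updates follow from the recursion for the sum of squared deviations
`M k = ∑ i ≤ k, (x i - x̄ₖ)²`, namely `M (k+1) = M k + (x (k+1) - x̄ₖ) (x (k+1) - x̄ₖ₊₁)`.
It comes from the parallel axis identity `∑ (x i - c)² = ∑ (x i - x̄)² + k (x̄ - c)²`
applied with `c = x̄ₖ₊₁` to the first `k` terms, since `x̄ₖ₊₁ - x̄ₖ = (x (k+1) - x̄ₖ) / (k+1)`.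
-/

open Finset

lemma Finset.card_mul_sum_div_card {ι : Type*} (s : Finset ι) (f : ι → ℝ) :
    (#s : ℝ) * ((∑ i ∈ s, f i) / #s) = ∑ i ∈ s, f i := by
  rcases s.eq_empty_or_nonempty with rfl | hs
  · simp
  · exact mul_div_cancel₀ _ (Nat.cast_ne_zero.mpr hs.card_pos.ne')

theorem Finset.sum_sq_sub_eq_sum_sq_sub_mean_add {ι : Type*} (s : Finset ι) (f : ι → ℝ)
    (c : ℝ) :
    ∑ i ∈ s, (f i - c) ^ 2
      = ∑ i ∈ s, (f i - (∑ j ∈ s, f j) / #s) ^ 2 + #s * ((∑ j ∈ s, f j) / #s - c) ^ 2 := by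
  set μ := (∑ j ∈ s, f j) / #s
  have hμ : #s * μ = ∑ j ∈ s, f j := s.card_mul_sum_div_card f
  have hsplit : ∀ i, (f i - c) ^ 2 = (f i - μ) ^ 2 + 2 * (μ - c) * (f i - μ) + (μ - c) ^ 2 :=
    fun i => by ring
  simp only [hsplit, sum_add_distrib, ← mul_sum, sum_sub_distrib, sum_const, nsmul_eq_mul,
    ← hμ]
  ring

lemma natCast_mul_sum_Icc_div (g : ℕ → ℝ) (k : ℕ) :
    (k : ℝ) * ((∑ i ∈ Icc 1 k, g i) / k) = ∑ i ∈ Icc 1 k, g i := by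
  simpa using (Icc 1 k).card_mul_sum_div_card g

lemma popMean_succ (x : ℕ → ℝ) (k : ℕ) :
    popMean x (k + 1) = popMean x k + (x (k + 1) - popMean x k) / (k + 1) := by
  have hk : (k : ℝ) * popMean x k = ∑ i ∈ Icc 1 k, x i := natCast_mul_sum_Icc_div x k
  rw [popMean, sum_Icc_succ_top (Nat.le_add_left 1 k), ← hk]
  field_simp
  push_cast
  ring

lemma sum_sq_sub_popMean_succ (x : ℕ → ℝ) (k : ℕ) :
    ∑ i ∈ Icc 1 (k + 1), (x i - popMean x (k + 1)) ^ 2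
      = ∑ i ∈ Icc 1 k, (x i - popMean x k) ^ 2
        + (x (k + 1) - popMean x k) * (x (k + 1) - popMean x (k + 1)) := by
  rw [sum_Icc_succ_top (Nat.le_add_left 1 k), sum_sq_sub_eq_sum_sq_sub_mean_add, Nat.card_Icc,
    Nat.add_sub_cancel, ← popMean, add_assoc, popMean_succ]
  field_simp
  ring

lemma popVar_succ (x : ℕ → ℝ) (k : ℕ) :
    popVar x (k + 1) = (1 - 1 / (k + 1 : ℝ)) * popVar x k
      + (x (k + 1) - popMean x k) * (x (k + 1) - popMean x (k + 1)) / (k + 1) := by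
  have hk : (k : ℝ) * popVar x k = ∑ i ∈ Icc 1 k, (x i - popMean x k) ^ 2 :=
    natCast_mul_sum_Icc_div _ k
  rw [popVar, sum_sq_sub_popMean_succ, ← hk]
  field_simp
  push_cast
  ring

/-- The combined Welford updates preserve the invariant: for any `n ≥ 1`, if
`(xbar, s2)` are the population mean and variance of `x 1, ..., x (n-1)` (both `0`
when `n = 1`), then after the updates `xbar' = xbar + (x n - xbar)/n` and
`s2' = (1 - 1/n) s2 + (x n - xbar)(x n - xbar')/n`, the pair `(xbar', s2')` gives
the population mean and variance of `x 1, ..., x n`. -/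
theorem welford_combined_update (n : ℕ) (hn : 1 ≤ n) (x : ℕ → ℝ)
    (xbar s2 xbar' s2' : ℝ)
    (hmean : xbar = popMean x (n - 1))
    (hvar : s2 = popVar x (n - 1))
    (hmean' : xbar' = xbar + (x n - xbar) / n)
    (hvar' : s2' = (1 - 1 / (n : ℝ)) * s2 + (x n - xbar) * (x n - xbar') / n) :
    xbar' = popMean x n ∧ s2' = popVar x n := by
  obtain ⟨k, rfl⟩ := Nat.exists_eq_add_of_le' hn
  rw [Nat.add_sub_cancel] at hmean hvar
  push_cast at hmean' hvar'
  have hmean_succ : xbar' = popMean x (k + 1) := by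
    rw [hmean', hmean, popMean_succ]
  refine ⟨hmean_succ, ?_⟩
  rw [hvar', hvar, hmean, hmean_succ, popVar_succ]
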